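/- arXiv:1610.02788 — 3 statements merged into one kernel-verified Lean document; each statement's English description precedes it below -/
import Mathlib

section
/- Let 𝒢 be a pre-(C-UDS), T an ultradistribution with compact support in [0,∞), and φ a test function supported in (0,∞). Then 𝒢(φ)G(T) ⊆ G(T)𝒢(φ) and C G(T) ⊆ G(T) C (as relations in E × E). -/
/-- Let `𝒢` be a pre-(C-UDS) (commutative truncated convolution `conv`, semigroup
identity `𝒢(φ*₀ψ)C = 𝒢(φ)𝒢(ψ)`, `C` commuting with every `𝒢(φ)`), `T` an
ultradistribution with compact support in `[0,∞)` acting on test functions by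
`Tc` (commuting with convolution by test functions), and `φ ∈ Φ = 𝒟₀*` a test
function supported in `(0,∞)`. Then `𝒢(φ)G(T) ⊆ G(T)𝒢(φ)` and `C G(T) ⊆ G(T) C`
as relations in `E × E`. -/
theorem stmt12 {E 𝒟 : Type*} [AddCommGroup E] [Module ℂ E]
    (Φ : Set 𝒟) (conv : 𝒟 → 𝒟 → 𝒟) (hcomm : ∀ φ ψ, conv φ ψ = conv ψ φ)
    (G : 𝒟 → E →ₗ[ℂ] E) (C : E →ₗ[ℂ] E)
    (hC : ∀ φ, C ∘ₗ G φ = G φ ∘ₗ C)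
    (hCS1 : ∀ φ ψ, G (conv φ ψ) ∘ₗ C = G φ ∘ₗ G ψ)
    (Tc : 𝒟 → 𝒟) (hT : ∀ φ ψ, Tc (conv φ ψ) = conv (Tc φ) ψ)
    (GT : Set (E × E)) (hGT : GT = {p : E × E | ∀ η ∈ Φ, G (Tc η) p.1 = G η p.2})
    (φ : 𝒟) (hφ : φ ∈ Φ) :
    {p : E × E | ∃ q ∈ GT, p = (q.1, G φ q.2)} ⊆ {p : E × E | (G φ p.1, p.2) ∈ GT} ∧
    {p : E × E | ∃ q ∈ GT, p = (q.1, C q.2)} ⊆ {p : E × E | (C p.1, p.2) ∈ GT} := by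
  subst hGT
  have key : ∀ α β (x : E), G α (G β x) = G β (G α x) := by
    intro α β x
    have h1 := congrArg (fun L : E →ₗ[ℂ] E => L x) (hCS1 α β)
    have h2 := congrArg (fun L : E →ₗ[ℂ] E => L x) (hCS1 β α)
    simp only [LinearMap.comp_apply] at h1 h2
    rw [← h1, ← h2, hcomm]
  constructor
  · rintro p ⟨q, hq, rfl⟩
    intro η hη
    simp only
    rw [key, hq η hη, key]
  · rintro p ⟨q, hq, rfl⟩
    intro η hη
    have hc : ∀ ψ (x : E), G ψ (C x) = C (G ψ x) := by
      intro ψ x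
      have := congrArg (fun L : E →ₗ[ℂ] E => L x) (hC ψ)
      simpa using this.symm
    simp only
    rw [hc, hq η hη, hc]
end

section
/- Let 𝒢 be a pre-(C-UDS) and let S, T be ultradistributions with compact support in [0,∞). Then G(S)G(T) ⊆ G(S*T) and G(S) + G(T) ⊆ G(S+T), where sums and products of multivalued linear operators are taken in the MLO sense. -/
/-- Let `𝒢` be a pre-(C-UDS) and `S, T` ultradistributions with compact support in
`[0,∞)`, acting linearly on the test space `Φ = 𝒟₀*` by `Sc = S*·`, `Tc = T*·`,
with `(S*T)*φ = S*(T*φ)` and `(S+T)*φ = S*φ + T*φ` (and convolution of such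
distributions commuting). Then `G(S)G(T) ⊆ G(S*T)` and `G(S) + G(T) ⊆ G(S+T)`
in the MLO sense. -/
theorem stmt13 {E Φ : Type*} [AddCommGroup E] [Module ℂ E] [AddCommGroup Φ] [Module ℂ Φ]
    (G : Φ →ₗ[ℂ] E →ₗ[ℂ] E) (Sc Tc : Φ →ₗ[ℂ] Φ)
    (hST : ∀ φ, Sc (Tc φ) = Tc (Sc φ))
    (GS GT GST GSpT : Set (E × E))
    (hGS : GS = {p : E × E | ∀ φ : Φ, G (Sc φ) p.1 = G φ p.2})
    (hGT : GT = {p : E × E | ∀ φ : Φ, G (Tc φ) p.1 = G φ p.2})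
    (hGST : GST = {p : E × E | ∀ φ : Φ, G (Sc (Tc φ)) p.1 = G φ p.2})
    (hGSpT : GSpT = {p : E × E | ∀ φ : Φ, G (Sc φ + Tc φ) p.1 = G φ p.2}) :
    {p : E × E | ∃ y : E, (p.1, y) ∈ GT ∧ (y, p.2) ∈ GS} ⊆ GST ∧
    {p : E × E | ∃ y z : E, (p.1, y) ∈ GS ∧ (p.1, z) ∈ GT ∧ p.2 = y + z} ⊆ GSpT := by
  subst hGS hGT hGST hGSpT
  constructor
  · rintro ⟨x, z⟩ ⟨y, hT, hS⟩ φ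
    have h1 := hT (Sc φ)
    have h2 := hS φ
    simp only [hST φ]
    simp only at h1 h2
    rw [h1, h2]
  · rintro ⟨x, w⟩ ⟨y, z, hS, hT, hw⟩ φ
    simp only at hS hT ⊢
    simp only at hw
    rw [map_add, LinearMap.add_apply, hS φ, hT φ, hw, map_add]
end

section
/- Let 𝒢 be a pre-(C-UDS) on E and 𝒢* its dual defined by 𝒢*(φ) := 𝒢(φ)* ∈ L(E*). Then 𝒢* is a pre-(C*-UDS) on E* and 𝒩(𝒢*) = (closure ℛ(𝒢))°, the polar (annihilator) of the closure of ℛ(𝒢). -/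
/-- Let `𝒢` be a pre-(C-UDS) on `E` and `𝒢*` its dual, `𝒢*(φ) = 𝒢(φ)* : f ↦ f ∘ 𝒢(φ)`
on `E* = E →L[ℂ] ℂ`, with `C* : f ↦ f ∘ C`. Then `𝒢*` is a pre-(C*-UDS) on `E*`
(`C*` commutes with every `𝒢*(φ)` and `𝒢*(φ*₀ψ)C* = 𝒢*(φ)𝒢*(ψ)`), and
`𝒩(𝒢*) = (closure ℛ(𝒢))°`, the annihilator of the closure of `ℛ(𝒢)`. -/
theorem stmt17 {E 𝒟 : Type*} [AddCommGroup E] [Module ℂ E] [TopologicalSpace E]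
    (Φ : Set 𝒟) (conv : 𝒟 → 𝒟 → 𝒟) (hcomm : ∀ φ ψ, conv φ ψ = conv ψ φ)
    (G : 𝒟 → E →L[ℂ] E) (C : E →L[ℂ] E)
    (hC : ∀ φ, C.comp (G φ) = (G φ).comp C)
    (hCS1 : ∀ φ ψ, (G (conv φ ψ)).comp C = (G φ).comp (G ψ)) :
    (∀ (φ : 𝒟) (f : E →L[ℂ] ℂ), (f.comp C).comp (G φ) = (f.comp (G φ)).comp C) ∧
    (∀ (φ ψ : 𝒟) (f : E →L[ℂ] ℂ),
      (f.comp C).comp (G (conv φ ψ)) = (f.comp (G ψ)).comp (G φ)) ∧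
    {f : E →L[ℂ] ℂ | ∀ φ ∈ Φ, f.comp (G φ) = 0} =
      {f : E →L[ℂ] ℂ | ∀ x ∈ closure (⋃ φ ∈ Φ, Set.range (G φ)), f x = 0} := by
  refine ⟨fun φ f => ?_, fun φ ψ f => ?_, ?_⟩
  · rw [ContinuousLinearMap.comp_assoc, ContinuousLinearMap.comp_assoc, hC]
  · rw [ContinuousLinearMap.comp_assoc, hcomm, hC, hCS1, ← ContinuousLinearMap.comp_assoc]
  · ext f
    simp only [Set.mem_setOf_eq]
    constructor
    · intro h x hx
      have hsub : (⋃ φ ∈ Φ, Set.range (G φ)) ⊆ (f : E → ℂ) ⁻¹' {0} := by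
        intro y hy
        simp only [Set.mem_iUnion] at hy
        obtain ⟨φ, hφ, z, rfl⟩ := hy
        have := congrArg (fun g : E →L[ℂ] ℂ => g z) (h φ hφ)
        simpa using this
      have hcl : closure (⋃ φ ∈ Φ, Set.range (G φ)) ⊆ (f : E → ℂ) ⁻¹' {0} :=
        closure_minimal hsub (IsClosed.preimage f.continuous isClosed_singleton)
      exact hcl hx
    · intro h φ hφ
      ext z
      exact h (G φ z) (subset_closure (Set.mem_iUnion.2 ⟨φ, Set.mem_iUnion.2 ⟨hφ, z, rfl⟩⟩))
end
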